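/- arXiv:2107.10936 — 2 statements merged into one kernel-verified Lean document; each statement's English description precedes it below -/
import Mathlib

section
/- For every process P in the prefixed normal form (NF), the inequality 5 * sizeOpt P ≤ 3 * (sizeHO P + 2 * trCount P) holds. (This is the 'minimality measure' theorem: the optimized decomposition uses at most 3/5 of the propagators of the naive decomposition.) -/
inductive Proc : Type
  | nil : Proc
  | out : Proc → Proc
  | inp : Proc → Proc
  | res : Proc → Proc
  | resTr : Proc → Proc
  | par : Proc → Proc → Proc

def sizeHO : Proc → ℕ
  | .nil => 1
  | .out P => sizeHO P + 3
  | .inp P => sizeHO P + 3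
  | .res P => sizeHO P
  | .resTr P => sizeHO P
  | .par P Q => sizeHO P + sizeHO Q + 1

def sizeOpt : Proc → ℕ
  | .nil => 1
  | .out P => sizeOpt P + 1
  | .inp P => sizeOpt P + 1
  | .res P => sizeOpt P
  | .resTr P => sizeOpt P + 1
  | .par P Q => sizeOpt P + sizeOpt Q + 1

def trCount : Proc → ℕ
  | .nil => 0
  | .out P => trCount P
  | .inp P => trCount P
  | .res P => trCount P
  | .resTr P => trCount P + 1
  | .par P Q => trCount P + trCount Q

inductive NF : Proc → Prop
  | outNil : NF (.out .nil)
  | inpNil : NF (.inp .nil)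
  | out {P} : NF P → NF (.out P)
  | inp {P} : NF P → NF (.inp P)
  | res {P} : NF P → NF (.res P)
  | resTr {P} : NF P → NF (.resTr P)
  | par {P Q} : NF P → NF Q → NF (.par P Q)

lemma aux_0 (P : Proc) (h : NF P) :
    5 * sizeOpt P + 2 ≤ 3 * (sizeHO P + 2 * trCount P) := by
  induction h <;> simp [sizeOpt, sizeHO, trCount] at * <;> omega

theorem stmt_0 (P : Proc) (h : NF P) :
    5 * sizeOpt P ≤ 3 * (sizeHO P + 2 * trCount P) := by
  have := aux_0 P h; omega
end

section
/- For every process P in normal form, the per-component inequality with offset 1 holds: 3 * (sizeHO P + 2 * trCount P + 1) ≥ 5 * (sizeOpt P + 1). -/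
theorem stmt_9 (P : Proc) (h : NF P) :
    3 * (sizeHO P + 2 * trCount P + 1) ≥ 5 * (sizeOpt P + 1) := by
  induction h with
  | outNil => simp [sizeHO, sizeOpt, trCount]
  | inpNil => simp [sizeHO, sizeOpt, trCount]
  | out _ ih => simp [sizeHO, sizeOpt, trCount] at *; omega
  | inp _ ih => simp [sizeHO, sizeOpt, trCount] at *; omega
  | res _ ih => simp [sizeHO, sizeOpt, trCount] at *; omega
  | resTr _ ih => simp [sizeHO, sizeOpt, trCount] at *; omega
  | par _ _ ih1 ih2 => simp [sizeHO, sizeOpt, trCount] at *; omega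
end
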